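/- arXiv:2208.08726 — 2 statements merged into one kernel-verified Lean document; each statement's English description precedes it below -/
import Mathlib

section
/- Let G have a negative edge (j,i) with weight W_{j,i} < 0, and two positive edges (k,j), (k,i) with weights W_{k,j}, W_{k,i} satisfying W_{k,j} ≥ −2W_{j,i} and W_{k,i} ≥ −2W_{j,i}. If all three edges are removed from G, yielding Laplacian L_B, then L − L_B is positive semidefinite. -/
open Matrix

/-!
Write `u = x_j - x_i`, `v = x_k - x_j`, `w = x_k - x_i`. Since `u = w - v`, we have
`u² ≤ 2 (v² + w²)`, so the negative contribution `W_{j,i} u²` of the removed negative edge is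
dominated by `-2 W_{j,i} (v² + w²) ≤ W_{k,j} v² + W_{k,i} w²`. Hence the removed triangle has a
nonnegative quadratic form, and that form is exactly `xᵀ (L - L_B) x`.
-/

theorem triangle_weighted_sq_nonneg {a b c : ℝ} (ha : a ≤ 0) (hb : -2 * a ≤ b) (hc : -2 * a ≤ c)
    (x y z : ℝ) : 0 ≤ a * (y - z) ^ 2 + b * (x - y) ^ 2 + c * (x - z) ^ 2 := by
  nlinarith [sq_nonneg (x - y), sq_nonneg (x - z), sq_nonneg (2 * x - y - z)]

theorem sum_triangle_weighted_sq_nonneg {V : Type*} [DecidableEq V] (W : V → V → ℝ) (x : V → ℝ)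
    {j i k : V} (hneg : W j i < 0) (h1 : -2 * W j i ≤ W k j) (h2 : -2 * W j i ≤ W k i) :
    0 ≤ ∑ e ∈ ({(j, i), (k, j), (k, i)} : Finset (V × V)), W e.1 e.2 * (x e.1 - x e.2) ^ 2 := by
  -- The finset collapses only if `k = j`, which contradicts `h2`, or `j = i`, where the negative
  -- term vanishes.
  have hkj : k ≠ j := by
    rintro rfl
    linarith
  by_cases hij : j = i
  · subst hij
    refine Finset.sum_nonneg fun e he => ?_
    simp only [Finset.mem_insert, Finset.mem_singleton, or_self] at he
    rcases he with rfl | rfl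
    · simp
    · exact mul_nonneg (by linarith) (sq_nonneg _)
  · rw [Finset.sum_insert (by simp [Ne.symm hkj]), Finset.sum_insert (by simpa using hij),
      Finset.sum_singleton, ← add_assoc]
    exact triangle_weighted_sq_nonneg hneg.le h1 h2 _ _ _

theorem removing_negative_edge_case1_psd_general {N : ℕ}
    (W : Matrix (Fin N) (Fin N) ℝ)
    (E : Finset (Fin N × Fin N)) (j i k : Fin N)
    (hji : (j, i) ∈ E) (hkj : (k, j) ∈ E) (hki : (k, i) ∈ E)
    (hneg : W j i < 0) (h1 : -2 * W j i ≤ W k j) (h2 : -2 * W j i ≤ W k i)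
    (L LB : Matrix (Fin N) (Fin N) ℝ) (hL : L.IsHermitian) (hLB : LB.IsHermitian)
    (hformL : ∀ x : Fin N → ℝ,
      x ⬝ᵥ L *ᵥ x = ∑ e ∈ E, W e.1 e.2 * (x e.1 - x e.2) ^ 2)
    (hformLB : ∀ x : Fin N → ℝ,
      x ⬝ᵥ LB *ᵥ x = ∑ e ∈ E \ {(j, i), (k, j), (k, i)}, W e.1 e.2 * (x e.1 - x e.2) ^ 2) :
    (L - LB).PosSemidef := by
  have htriangle : {(j, i), (k, j), (k, i)} ⊆ E := by
    simp [Finset.insert_subset_iff, hji, hkj, hki]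
  refine posSemidef_iff_dotProduct_mulVec.mpr ⟨hL.sub hLB, fun x => ?_⟩
  rw [star_trivial, sub_mulVec, dotProduct_sub, hformL, hformLB,
    Finset.sum_sdiff_eq_sub htriangle, sub_sub_cancel]
  exact sum_triangle_weighted_sq_nonneg W x hneg h1 h2

/-- Removing a negative edge (j,i) together with two previously-present positive edges
(k,j), (k,i) whose weights satisfy W_{k,j} ≥ −2W_{j,i} and W_{k,i} ≥ −2W_{j,i}
yields L − L_B positive semidefinite. -/
theorem removing_negative_edge_case1_psd {N : ℕ}
    (W : Matrix (Fin N) (Fin N) ℝ) (hW : W.IsSymm)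
    (E : Finset (Fin N × Fin N)) (j i k : Fin N)
    (hji : (j, i) ∈ E) (hkj : (k, j) ∈ E) (hki : (k, i) ∈ E)
    (hneg : W j i < 0) (h1 : -2 * W j i ≤ W k j) (h2 : -2 * W j i ≤ W k i)
    (L LB : Matrix (Fin N) (Fin N) ℝ) (hL : L.IsHermitian) (hLB : LB.IsHermitian)
    (hformL : ∀ x : Fin N → ℝ,
      x ⬝ᵥ L *ᵥ x = ∑ e ∈ E, W e.1 e.2 * (x e.1 - x e.2) ^ 2)
    (hformLB : ∀ x : Fin N → ℝ,
      x ⬝ᵥ LB *ᵥ x = ∑ e ∈ E \ {(j, i), (k, j), (k, i)}, W e.1 e.2 * (x e.1 - x e.2) ^ 2) :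
    (L - LB).PosSemidef :=
  removing_negative_edge_case1_psd_general W E j i k hji hkj hki hneg h1 h2 L LB hL hLB hformL
    hformLB
end

section
/- A signed graph is balanced (every cycle has an even number of negative edges) if and only if its vertex set can be 2-colored so that every positive edge joins same-colored vertices and every negative edge joins oppositely-colored vertices (Cartwright–Harary theorem). -/
/-!
In a balanced signed graph the sign of every closed walk is `1`: shortening a walk to a path
by bypassing its repeated vertices only removes closed subwalks that are either cycles or a
single edge traversed back and forth. Hence the sign of a walk depends only on its endpoints,
and the sign of a walk from a fixed root of each connected component to `v` is a switching
function `β`. Conversely, along any walk the product of the signs `β u * β v` telescopes.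
-/

namespace SimpleGraph

variable {V M : Type*} [CommMonoid M] {G : SimpleGraph V}

def IsBalanced (G : SimpleGraph V) (σ : Sym2 V → M) : Prop :=
  ∀ (v : V) (w : G.Walk v v), w.IsCycle → (w.edges.map σ).prod = 1

namespace Walk

theorem IsPath.edges_eq_singleton_of_mem_edges {u v : V} {p : G.Walk u v} (hp : p.IsPath)
    (he : s(u, v) ∈ p.edges) : p.edges = [s(u, v)] := by
  cases p with
  | nil => simp at he
  | cons h q =>
    rw [cons_isPath_iff] at hp
    rw [edges_cons, List.mem_cons, Sym2.congr_right] at he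
    rcases he with rfl | he
    · rw [(isPath_iff_nil.1 hp.1).eq_nil, edges_cons, edges_nil]
    · exact absurd (q.fst_mem_support_of_mem_edges he) hp.2

variable {σ : Sym2 V → M}

theorem prod_edges_mul_self (hσ : ∀ e ∈ G.edgeSet, σ e * σ e = 1) {u v : V} (p : G.Walk u v) :
    (p.edges.map σ).prod * (p.edges.map σ).prod = 1 := by
  refine List.prod_induction (fun x => x * x = 1) (fun a b ha hb => ?_) (mul_one 1) ?_
  · rw [mul_mul_mul_comm, ha, hb, mul_one]
  · simp only [List.mem_map]
    rintro _ ⟨e, he, rfl⟩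
    exact hσ e (p.edges_subset_edgeSet he)

theorem prod_edges_cons_eq_one_of_isPath (hσ : ∀ e ∈ G.edgeSet, σ e * σ e = 1)
    (hbal : G.IsBalanced σ) {u v : V} (h : G.Adj u v) {p : G.Walk v u} (hp : p.IsPath) :
    ((cons h p).edges.map σ).prod = 1 := by
  by_cases he : s(u, v) ∈ p.edges
  · rw [Sym2.eq_swap] at he
    simp [hp.edges_eq_singleton_of_mem_edges he, Sym2.eq_swap, hσ _ (G.mem_edgeSet.2 h)]
  · exact hbal u _ ((cons_isCycle_iff p h).2 ⟨hp, he⟩)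

theorem prod_edges_bypass [DecidableEq V] (hσ : ∀ e ∈ G.edgeSet, σ e * σ e = 1)
    (hbal : G.IsBalanced σ) {u v : V} (p : G.Walk u v) :
    (p.bypass.edges.map σ).prod = (p.edges.map σ).prod := by
  induction p with
  | nil => rfl
  | @cons u w v h p ih =>
    rw [bypass]
    split_ifs with hs
    · have hcycle := prod_edges_cons_eq_one_of_isPath hσ hbal h (p.bypass_isPath.takeUntil hs)
      rw [edges_cons, List.map_cons, List.prod_cons] at hcycle ⊢
      conv_rhs => rw [← ih, ← p.bypass.take_spec hs, edges_append, List.map_append,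
        List.prod_append, ← mul_assoc, hcycle, one_mul]
    · simp only [edges_cons, List.map_cons, List.prod_cons, ih]

theorem prod_edges_eq_one_of_loop (hσ : ∀ e ∈ G.edgeSet, σ e * σ e = 1)
    (hbal : G.IsBalanced σ) {v : V} (w : G.Walk v v) : (w.edges.map σ).prod = 1 := by
  classical
  rw [← prod_edges_bypass hσ hbal, (isPath_iff_nil.1 w.bypass_isPath).eq_nil, edges_nil,
    List.map_nil, List.prod_nil]

theorem prod_edges_eq_of_isBalanced (hσ : ∀ e ∈ G.edgeSet, σ e * σ e = 1)
    (hbal : G.IsBalanced σ) {u v : V} (p q : G.Walk u v) :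
    (p.edges.map σ).prod = (q.edges.map σ).prod := by
  have hloop := prod_edges_eq_one_of_loop hσ hbal (p.append q.reverse)
  rw [edges_append, edges_reverse, List.map_append, List.prod_append, List.map_reverse,
    List.prod_reverse] at hloop
  calc (p.edges.map σ).prod
      = (p.edges.map σ).prod * ((q.edges.map σ).prod * (q.edges.map σ).prod) := by
        rw [prod_edges_mul_self hσ, mul_one]
    _ = (q.edges.map σ).prod := by rw [← mul_assoc, hloop, one_mul]

theorem prod_edges_eq_mul {β : V → M} (hβ : ∀ v, β v * β v = 1)
    (hσβ : ∀ u v, G.Adj u v → β u * β v = σ s(u, v)) {u v : V} (p : G.Walk u v) :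
    (p.edges.map σ).prod = β u * β v := by
  induction p with
  | nil => exact (hβ _).symm
  | @cons u w v h p ih =>
    rw [edges_cons, List.map_cons, List.prod_cons, ih, ← hσβ u w h]
    calc β u * β w * (β w * β v) = β u * (β w * β w) * β v := by ac_rfl
      _ = β u * β v := by rw [hβ, mul_one]

end Walk

theorem IsBalanced.exists_switching {σ : Sym2 V → M} (hσ : ∀ e ∈ G.edgeSet, σ e * σ e = 1)
    (hbal : G.IsBalanced σ) :
    ∃ β : V → M, (∀ v, β v * β v = 1) ∧ ∀ u v, G.Adj u v → β u * β v = σ s(u, v) := by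
  have hroot : ∀ v, G.Reachable (G.connectedComponentMk v).out v := fun v =>
    ConnectedComponent.exact (G.connectedComponentMk v).out_eq
  refine ⟨fun v => ((hroot v).some.edges.map σ).prod,
    fun v => Walk.prod_edges_mul_self hσ _, fun u v huv => ?_⟩
  have hsame : (G.connectedComponentMk u).out = (G.connectedComponentMk v).out := by
    rw [ConnectedComponent.sound huv.reachable]
  have hv := Walk.prod_edges_eq_of_isBalanced hσ hbal
    (((hroot u).some.concat huv).copy hsame rfl) (hroot v).some
  rw [Walk.edges_copy, Walk.edges_concat, List.map_concat, List.prod_concat] at hv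
  dsimp only
  rw [← hv, ← mul_assoc, Walk.prod_edges_mul_self hσ, one_mul]

theorem isBalanced_iff_exists_switching {σ : Sym2 V → M}
    (hσ : ∀ e ∈ G.edgeSet, σ e * σ e = 1) :
    G.IsBalanced σ ↔
      ∃ β : V → M, (∀ v, β v * β v = 1) ∧ ∀ u v, G.Adj u v → β u * β v = σ s(u, v) := by
  refine ⟨IsBalanced.exists_switching hσ, ?_⟩
  rintro ⟨β, hβ, hσβ⟩ v w -
  rw [Walk.prod_edges_eq_mul hβ hσβ, hβ]

end SimpleGraph

open SimpleGraph

/-- Cartwright–Harary theorem: a signed graph is balanced (every cycle has sign +1,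
equivalently an even number of negative edges) iff its vertices can be 2-colored with
±1 so that every positive edge joins same-colored vertices and every negative edge joins
oppositely-colored vertices. -/
theorem cartwright_harary {V : Type*} (G : SimpleGraph V)
    (σ : Sym2 V → ℤ) (hσ : ∀ e ∈ G.edgeSet, σ e = 1 ∨ σ e = -1) :
    (∀ (v : V) (w : G.Walk v v), w.IsCycle → (w.edges.map σ).prod = 1) ↔
    ∃ β : V → ℤ, (∀ v, β v = 1 ∨ β v = -1) ∧
      ∀ u v, G.Adj u v → β u * β v = σ s(u, v) := by
  simp_rw [← mul_self_eq_one_iff] at hσ ⊢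
  exact isBalanced_iff_exists_switching hσ
end
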